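/- Fix N ≥ 2 and an initial configuration ζ₀ ∈ ℝ^N. Let (k_t)_{t≥0} be i.i.d. random indices uniformly distributed on {1,…,N}, and define (ζ_t)_{t≥0} by letting ζ_{t+1} be the result of a Euclidean midpoint update of ζ_t at the cyclic edge (k_t, k_t+1). Then, almost surely, (1/N)∑_{i=1}^N (ζ_t(i+1) − ζ_t(i))² → 0 as t → ∞ (indices cyclic). -/

import Mathlib

open MeasureTheory ProbabilityTheory Filter

/-- Euclidean midpoint update at the pair of indices `a, b`. -/
noncomputable def midUpdate {N : ℕ} (ζ : ZMod N → ℝ) (a b : ZMod N) : ZMod N → ℝ :=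
  fun i => if i = a ∨ i = b then (ζ a + ζ b) / 2 else ζ i

/-- The midpoint process on the ring driven by the edge sequence `ks`: at step `t` the
cyclic edge `(ks t, ks t + 1)` is updated. -/
noncomputable def midProcess {N : ℕ} (ζ₀ : ZMod N → ℝ) (ks : ℕ → ZMod N) :
    ℕ → ZMod N → ℝ
  | 0 => ζ₀
  | t + 1 => midUpdate (midProcess ζ₀ ks t) (ks t) (ks t + 1)

section Aux
variable {N : ℕ}

noncomputable def enE [NeZero N] (ζ : ZMod N → ℝ) : ℝ :=
  ∑ i : ZMod N, (ζ (i + 1) - ζ i) ^ 2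

noncomputable def totE [NeZero N] (ζ : ZMod N → ℝ) : ℝ :=
  ∑ i : ZMod N, ζ i ^ 2

noncomputable def cProc : (ZMod N → ℝ) → (t : ℕ) → (Fin t → ZMod N) → ZMod N → ℝ
  | ζ, 0, _ => ζ
  | ζ, t + 1, w => cProc (midUpdate ζ (w 0) (w 0 + 1)) t (w ∘ Fin.succ)

noncomputable def eN [NeZero N] : ℕ → (ZMod N → ℝ) → ℝ
  | 0, ζ => enE ζ
  | t + 1, ζ => (N : ℝ)⁻¹ * ∑ a : ZMod N, eN t (midUpdate ζ a (a + 1))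

noncomputable def EW [NeZero N] : ℕ → (ZMod N → ℝ) → ℝ
  | 0, ζ => totE ζ
  | t + 1, ζ => (N : ℝ)⁻¹ * ∑ a : ZMod N, EW t (midUpdate ζ a (a + 1))

lemma enE_nonneg [NeZero N] (ζ : ZMod N → ℝ) : 0 ≤ enE ζ :=
  Finset.sum_nonneg fun _ _ => sq_nonneg _

lemma totE_nonneg [NeZero N] (ζ : ZMod N → ℝ) : 0 ≤ totE ζ :=
  Finset.sum_nonneg fun _ _ => sq_nonneg _

lemma eN_nonneg [NeZero N] (t : ℕ) (ζ : ZMod N → ℝ) : 0 ≤ eN t ζ := by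
  induction t generalizing ζ with
  | zero => exact enE_nonneg ζ
  | succ t ih =>
    exact mul_nonneg (by positivity) (Finset.sum_nonneg fun a _ => ih _)

lemma EW_nonneg [NeZero N] (t : ℕ) (ζ : ZMod N → ℝ) : 0 ≤ EW t ζ := by
  induction t generalizing ζ with
  | zero => exact totE_nonneg ζ
  | succ t ih =>
    exact mul_nonneg (by positivity) (Finset.sum_nonneg fun a _ => ih _)

lemma midProcess_shift (ζ : ZMod N → ℝ) (ks : ℕ → ZMod N) (t : ℕ) :
    midProcess ζ ks (t + 1) =
      midProcess (midUpdate ζ (ks 0) (ks 0 + 1)) (fun s => ks (s + 1)) t := by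
  induction t with
  | zero => rfl
  | succ t ih =>
    show midUpdate (midProcess ζ ks (t + 1)) (ks (t + 1)) (ks (t + 1) + 1) = _
    rw [ih]
    rfl

lemma midProcess_eq_cProc (ζ : ZMod N → ℝ) (ks : ℕ → ZMod N) (t : ℕ) :
    midProcess ζ ks t = cProc ζ t (fun s => ks s.val) := by
  induction t generalizing ζ ks with
  | zero => rfl
  | succ t ih =>
    rw [midProcess_shift, ih]
    rfl

lemma totE_midUpdate [NeZero N] (hN : 2 ≤ N) (ζ : ZMod N → ℝ) (a : ZMod N) :
    totE (midUpdate ζ a (a + 1)) = totE ζ - (ζ (a + 1) - ζ a) ^ 2 / 2 := by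
  haveI : Fact (1 < N) := ⟨hN⟩
  have hone : (1 : ZMod N) ≠ 0 := one_ne_zero
  have hne : a ≠ a + 1 := fun h => hone (left_eq_add.mp h)
  have key : ∀ i : ZMod N, (midUpdate ζ a (a + 1) i) ^ 2 =
      ζ i ^ 2 + ((if i = a then ((ζ a + ζ (a + 1)) / 2) ^ 2 - ζ a ^ 2 else 0)
        + (if i = a + 1 then ((ζ a + ζ (a + 1)) / 2) ^ 2 - ζ (a + 1) ^ 2 else 0)) := by
    intro i
    by_cases h1 : i = a
    · have h2 : ¬ i = a + 1 := fun h => hne (h1 ▸ h)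
      simp [midUpdate, h1, h2]
    · by_cases h2 : i = a + 1 <;> simp [midUpdate, h1, h2]
  rw [totE, totE]
  simp only [key]
  rw [Finset.sum_add_distrib, Finset.sum_add_distrib,
    Finset.sum_ite_eq' Finset.univ, Finset.sum_ite_eq' Finset.univ]
  simp only [Finset.mem_univ, if_true]
  ring

lemma EW_succ [NeZero N] (hN : 2 ≤ N) (t : ℕ) (ζ : ZMod N → ℝ) :
    EW (t + 1) ζ = EW t ζ - (2 * N : ℝ)⁻¹ * eN t ζ := by
  have hN0 : (N : ℝ) ≠ 0 := Nat.cast_ne_zero.mpr (by omega)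
  induction t generalizing ζ with
  | zero =>
    show (N : ℝ)⁻¹ * ∑ a : ZMod N, totE (midUpdate ζ a (a + 1)) = totE ζ - _
    have hcard : (Finset.univ : Finset (ZMod N)).card = N := by
      rw [Finset.card_univ, ZMod.card]
    simp only [totE_midUpdate hN]
    rw [Finset.sum_sub_distrib, Finset.sum_const, hcard, nsmul_eq_mul]
    have h2 : ∑ a : ZMod N, (ζ (a + 1) - ζ a) ^ 2 / 2 = eN 0 ζ / 2 := by
      show _ = enE ζ / 2
      rw [enE, Finset.sum_div]
    rw [h2]
    field_simp
  | succ t ih =>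
    show (N : ℝ)⁻¹ * ∑ a : ZMod N, EW (t + 1) (midUpdate ζ a (a + 1))
        = (N : ℝ)⁻¹ * (∑ a : ZMod N, EW t (midUpdate ζ a (a + 1)))
          - (2 * N : ℝ)⁻¹ * ((N : ℝ)⁻¹ * ∑ a : ZMod N, eN t (midUpdate ζ a (a + 1)))
    simp only [ih]
    rw [Finset.sum_sub_distrib, ← Finset.mul_sum]
    ring

lemma sum_eN_le [NeZero N] (hN : 2 ≤ N) (ζ : ZMod N → ℝ) (T : ℕ) :
    ∑ t ∈ Finset.range T, eN t ζ ≤ 2 * N * totE ζ := by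
  have hN0 : (0 : ℝ) < 2 * N := by
    have : (0:ℝ) < N := Nat.cast_pos.mpr (by omega)
    linarith
  have key : ∀ T, EW T ζ = totE ζ - (2 * N : ℝ)⁻¹ * ∑ t ∈ Finset.range T, eN t ζ := by
    intro T
    induction T with
    | zero => simp [EW]
    | succ T ih =>
      rw [EW_succ hN, ih, Finset.sum_range_succ]
      ring
  have h0 := EW_nonneg T ζ
  rw [key T] at h0
  rw [← sub_nonneg]
  calc (0:ℝ) ≤ (2 * N) * (totE ζ - (2 * N : ℝ)⁻¹ * ∑ t ∈ Finset.range T, eN t ζ) :=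
        mul_nonneg hN0.le h0
    _ = 2 * N * totE ζ - ∑ t ∈ Finset.range T, eN t ζ := by
        field_simp

lemma summable_eN [NeZero N] (hN : 2 ≤ N) (ζ : ZMod N → ℝ) :
    Summable (fun t => eN t ζ) :=
  summable_of_sum_range_le (fun t => eN_nonneg t ζ) (sum_eN_le hN ζ)

lemma eN_eq_sum [NeZero N] (t : ℕ) (ζ : ZMod N → ℝ) :
    eN t ζ = ∑ w : Fin t → ZMod N, ((N : ℝ)⁻¹) ^ t * enE (cProc ζ t w) := by
  induction t generalizing ζ with
  | zero => simp [eN, cProc]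
  | succ t ih =>
    show (N : ℝ)⁻¹ * ∑ a : ZMod N, eN t (midUpdate ζ a (a + 1)) = _
    rw [← (Fin.consEquiv (n := t) (fun _ => ZMod N)).sum_comp
      (fun w => ((N : ℝ)⁻¹) ^ (t + 1) * enE (cProc ζ (t + 1) w))]
    rw [Fintype.sum_prod_type]
    simp only [ih, Finset.mul_sum]
    refine Finset.sum_congr rfl fun a _ => Finset.sum_congr rfl fun v _ => ?_
    have hw : (Fin.consEquiv (n := t) (fun _ => ZMod N)) (a, v) = Fin.cons a v := by
      ext s
      refine Fin.cases ?_ (fun s => ?_) s <;> simp [Fin.consEquiv]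
    rw [hw]
    have hc : cProc ζ (t + 1) (Fin.cons a v) = cProc (midUpdate ζ a (a + 1)) t v := by
      have hv : Fin.cons a v ∘ Fin.succ = v := by
        ext s; simp [Fin.cons_succ]
      simp [cProc, Fin.cons_zero, hv]
    rw [hc, pow_succ]
    ring

end Aux

/-- For the random midpoint process on the ring with i.i.d. uniformly chosen
edges, almost surely the mean-square of the cyclic increments vanishes:
`(1/N) ∑ᵢ (ζ_t(i+1) - ζ_t(i))² → 0` as `t → ∞`. -/
theorem random_midpoint_process_increments_vanish
    (N : ℕ) [NeZero N] (hN : 2 ≤ N) (ζ₀ : ZMod N → ℝ)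
    {Ω : Type*} [MeasurableSpace Ω] (P : Measure Ω) [IsProbabilityMeasure P]
    (k : ℕ → Ω → ZMod N)
    (hindep : iIndepFun (m := fun _ => (⊤ : MeasurableSpace (ZMod N))) k P)
    (hunif : ∀ (t : ℕ) (a : ZMod N), P {ω | k t ω = a} = (N : ENNReal)⁻¹) :
    ∀ᵐ ω ∂P, Tendsto
      (fun t => (1 / (N : ℝ)) * ∑ i : ZMod N,
        (midProcess ζ₀ (fun s => k s ω) t (i + 1) - midProcess ζ₀ (fun s => k s ω) t i) ^ 2)
      atTop (nhds 0) := by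
  classical
  have hN0 : (N : ℝ) ≠ 0 := Nat.cast_ne_zero.mpr (by omega)
  have hNpos : (0 : ℝ) < N := Nat.cast_pos.mpr (by omega)
  set V : ℕ → Ω → ℝ := fun t ω => enE (midProcess ζ₀ (fun s => k s ω) t) with hV
  -- cylinder measures
  have hcyl : ∀ (t : ℕ) (w : Fin t → ZMod N),
      P {ω | ∀ s : Fin t, k s.val ω = w s} = ((N : ENNReal)⁻¹) ^ t := by
    intro t w
    set wext : ℕ → ZMod N := fun s => if h : s < t then w ⟨s, h⟩ else 0 with hwext
    have hset : {ω | ∀ s : Fin t, k s.val ω = w s}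
        = ⋂ i ∈ Finset.range t, k i ⁻¹' {wext i} := by
      ext ω
      simp only [Set.mem_setOf_eq, Set.mem_iInter, Finset.mem_range, Set.mem_preimage,
        Set.mem_singleton_iff, hwext]
      constructor
      · intro h i hi
        rw [dif_pos hi]
        exact h ⟨i, hi⟩
      · intro h s
        have := h s.val s.isLt
        rwa [dif_pos s.isLt] at this
    rw [hset, hindep.measure_inter_preimage_eq_mul (Finset.range t)
      (fun i _ => MeasurableSpace.measurableSet_top)]
    have hfac : ∀ i, P (k i ⁻¹' {wext i}) = (N : ENNReal)⁻¹ := fun i => hunif i (wext i)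
    simp [hfac, Finset.prod_const, Finset.card_range]
  -- Markov-type bound on bad events
  have hbad : ∀ (ε : ℝ), 0 < ε → ∀ t : ℕ,
      P {ω | ε ≤ V t ω} ≤ ENNReal.ofReal (eN t ζ₀ / ε) := by
    intro ε hε t
    set B : Finset (Fin t → ZMod N) :=
      Finset.univ.filter (fun w => ε ≤ enE (cProc ζ₀ t w)) with hB
    have hsub : {ω | ε ≤ V t ω} ⊆ ⋃ w ∈ B, {ω | ∀ s : Fin t, k s.val ω = w s} := by
      intro ω hω
      have hVω : V t ω = enE (cProc ζ₀ t (fun s : Fin t => k s.val ω)) := by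
        show enE (midProcess ζ₀ (fun s => k s ω) t) = _
        rw [midProcess_eq_cProc]
      refine Set.mem_iUnion₂.mpr ⟨fun s : Fin t => k s.val ω, ?_, fun s => rfl⟩
      rw [hB, Finset.mem_filter]
      exact ⟨Finset.mem_univ _, by rw [← hVω]; exact hω⟩
    calc P {ω | ε ≤ V t ω} ≤ ∑ w ∈ B, P {ω | ∀ s : Fin t, k s.val ω = w s} :=
          le_trans (measure_mono hsub) (measure_biUnion_finset_le B _)
      _ = B.card * ((N : ENNReal)⁻¹) ^ t := by
          simp [hcyl, Finset.sum_const]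
      _ ≤ ENNReal.ofReal (eN t ζ₀ / ε) := by
          -- real Markov bound
          have hmark : (B.card : ℝ) * ε ≤ (N : ℝ) ^ t * eN t ζ₀ := by
            have h1 : (B.card : ℝ) * ε ≤ ∑ w ∈ B, enE (cProc ζ₀ t w) := by
              calc (B.card : ℝ) * ε = ∑ _w ∈ B, ε := by rw [Finset.sum_const, nsmul_eq_mul]
                _ ≤ _ := Finset.sum_le_sum fun w hw => (Finset.mem_filter.mp hw).2
            have h2 : ∑ w ∈ B, enE (cProc ζ₀ t w)
                ≤ ∑ w : Fin t → ZMod N, enE (cProc ζ₀ t w) :=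
              Finset.sum_le_sum_of_subset_of_nonneg (Finset.filter_subset _ _)
                (fun w _ _ => enE_nonneg _)
            have h3 : ∑ w : Fin t → ZMod N, enE (cProc ζ₀ t w) = (N : ℝ) ^ t * eN t ζ₀ := by
              rw [eN_eq_sum, ← Finset.mul_sum, ← mul_assoc, ← mul_pow,
                mul_inv_cancel₀ hN0, one_pow, one_mul]
            calc (B.card : ℝ) * ε ≤ ∑ w ∈ B, enE (cProc ζ₀ t w) := h1
              _ ≤ _ := h2
              _ = _ := h3
          have hreal : (B.card : ℝ) * ((N : ℝ)⁻¹) ^ t ≤ eN t ζ₀ / ε := by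
            rw [le_div_iff₀ hε]
            calc (B.card : ℝ) * ((N : ℝ)⁻¹) ^ t * ε = (B.card : ℝ) * ε * ((N:ℝ)⁻¹) ^ t := by
                  ring
              _ ≤ (N : ℝ) ^ t * eN t ζ₀ * ((N:ℝ)⁻¹) ^ t :=
                  mul_le_mul_of_nonneg_right hmark (by positivity)
              _ = eN t ζ₀ * ((N : ℝ) * (N:ℝ)⁻¹) ^ t := by rw [mul_pow]; ring
              _ = eN t ζ₀ := by rw [mul_inv_cancel₀ hN0, one_pow, mul_one]
          have hconv : (B.card : ENNReal) * ((N : ENNReal)⁻¹) ^ t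
              = ENNReal.ofReal ((B.card : ℝ) * ((N : ℝ)⁻¹) ^ t) := by
            rw [ENNReal.ofReal_mul (by positivity), ENNReal.ofReal_pow (by positivity),
              ENNReal.ofReal_inv_of_pos hNpos]
            simp [ENNReal.ofReal_natCast]
          rw [hconv]
          exact ENNReal.ofReal_le_ofReal hreal
  -- Borel–Cantelli
  have hBC : ∀ n : ℕ, ∀ᵐ ω ∂P, ∀ᶠ t in atTop, ω ∉ {ω | (1 : ℝ) / (n + 1) ≤ V t ω} := by
    intro n
    refine MeasureTheory.ae_eventually_notMem ?_
    have hεpos : (0 : ℝ) < 1 / (n + 1) := by positivity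
    have hsummable : Summable (fun t => eN t ζ₀ / (1 / ((n : ℝ) + 1))) :=
      (summable_eN hN ζ₀).div_const _
    have hle : ∑' t, P {ω | (1 : ℝ) / (n + 1) ≤ V t ω}
        ≤ ∑' t, ENNReal.ofReal (eN t ζ₀ / (1 / ((n : ℝ) + 1))) :=
      ENNReal.tsum_le_tsum fun t => hbad _ hεpos t
    have heq : ∑' t, ENNReal.ofReal (eN t ζ₀ / (1 / ((n : ℝ) + 1)))
        = ENNReal.ofReal (∑' t, eN t ζ₀ / (1 / ((n : ℝ) + 1))) :=
      (ENNReal.ofReal_tsum_of_nonneg (fun t => div_nonneg (eN_nonneg t ζ₀) hεpos.le)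
        hsummable).symm
    exact ne_top_of_le_ne_top (by rw [heq]; exact ENNReal.ofReal_ne_top) hle
  have hae : ∀ᵐ ω ∂P, ∀ n : ℕ, ∀ᶠ t in atTop, ω ∉ {ω | (1 : ℝ) / (n + 1) ≤ V t ω} :=
    (ae_all_iff).mpr hBC
  filter_upwards [hae] with ω hω
  have hVtend : Tendsto (fun t => V t ω) atTop (nhds 0) := by
    rw [tendsto_order]
    constructor
    · intro a ha
      exact Eventually.of_forall fun t => lt_of_lt_of_le ha (enE_nonneg _)
    · intro a ha
      obtain ⟨n, hn⟩ := exists_nat_one_div_lt ha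
      filter_upwards [hω n] with t ht
      have : V t ω < 1 / (n + 1) := lt_of_not_ge ht
      exact this.trans hn
  have := hVtend.const_mul (1 / (N : ℝ))
  rw [mul_zero] at this
  exact this
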